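/- Let ⟨G, Eℓ⟩ be a two-player game graph with live edges, let A_1, …, A_r ⊆ V, and let R = {(G_1, R_1), …, (G_r, R_r)} be the Rabin condition with R_j := V ∖ A_j and G_j := V for all j ∈ {1,…,r}. Let Z* be the value of the permutation-based Rabin fixpoint for R: with p_0 := 0, G_{p_0} := ∅, R_{p_0} := ∅ and P = {1,…,r}, Z* := νY_{p_0}. μX_{p_0}. ⋃_{p_1 ∈ P} νY_{p_1}. μX_{p_1}. ⋯ ⋃_{p_r ∈ P∖{p_1,…,p_{r−1}}} νY_{p_r}. μX_{p_r}. ⋃_{j=0}^{r} C_{p_j}, where C_{p_j} := ( ⋂_{i=0}^{j} (V ∖ R_{p_i}) ) ∩ [ (G_{p_j} ∩ Cpre(Y_{p_j})) ∪ Apre(Y_{p_j}, X_{p_j}) ]. Let Z̃* := νY_0. μX_0. ⋃_{a=1}^{r} νY_a. [ Apre(Y_0, X_0) ∪ (A_a ∩ Cpre(Y_a)) ]. Then Z* = Z̃*. -/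
import Mathlib


/-- Least fixed point of a set transformer (Knaster–Tarski form). -/
def lfpSet {V : Type*} (f : Set V → Set V) : Set V := sInf {X | f X ⊆ X}

/-- Greatest fixed point of a set transformer (Knaster–Tarski form). -/
def gfpSet {V : Type*} (f : Set V → Set V) : Set V := sSup {X | X ⊆ f X}

/-- A two-player game graph with live edges: vertices are partitioned into
Player-0 vertices `V0` and Player-1 vertices `V1`, every vertex has a successor,
and live edges `El` are Player-1 edges. -/
structure LiveGameGraph (V : Type*) where
  V0 : Set V
  V1 : Set V
  E : V → V → Prop
  El : V → V → Prop
  cover : V0 ∪ V1 = Set.univ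
  disj : V0 ∩ V1 = ∅
  succ_nonempty : ∀ v : V, ∃ w, E v w
  live_sub : ∀ v w, El v w → v ∈ V1 ∧ E v w

namespace LiveGameGraph

variable {V : Type*}

/-- Pre∃0(S) -/
def pre0 (Gm : LiveGameGraph V) (S : Set V) : Set V :=
  {v | v ∈ Gm.V0 ∧ ∃ w, Gm.E v w ∧ w ∈ S}

/-- Pre∀1(S) -/
def pre1 (Gm : LiveGameGraph V) (S : Set V) : Set V :=
  {v | v ∈ Gm.V1 ∧ ∀ w, Gm.E v w → w ∈ S}

/-- Cpre(S) -/
def cpre (Gm : LiveGameGraph V) (S : Set V) : Set V := Gm.pre0 S ∪ Gm.pre1 S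

/-- Lpre∃(T) -/
def lpre (Gm : LiveGameGraph V) (T : Set V) : Set V :=
  {v | ∃ w, Gm.El v w ∧ w ∈ T}

/-- Apre(S,T) -/
def apre (Gm : LiveGameGraph V) (S T : Set V) : Set V :=
  Gm.cpre T ∪ (Gm.lpre T ∩ Gm.pre1 S)

end LiveGameGraph

namespace LiveGameGraph

variable {V : Type*}

/-- The nested permutation-based Rabin fixpoint, recursively peeling off one
permutation index at a time.  `avail` is the set of still-unchosen pair indices,
`Qcur` is the intersection ⋂ R̄ over the already-chosen prefix, and `acc` is the
union of the `C` terms of the already-chosen prefix (with their bound `Y`/`X`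
values substituted in). -/
def rabinAux (Gm : LiveGameGraph V) (Gp Rp : ℕ → Set V) :
    ℕ → Finset ℕ → Set V → Set V → Set V
  | 0, _, _, acc => acc
  | n + 1, avail, Qcur, acc =>
      ⋃ p ∈ avail,
        gfpSet fun Y => lfpSet fun X =>
          Gm.rabinAux Gp Rp n (avail.erase p) (Qcur ∩ (Rp p)ᶜ)
            (acc ∪ ((Qcur ∩ (Rp p)ᶜ) ∩ ((Gp p ∩ Gm.cpre Y) ∪ Gm.apre Y X)))

/-- The full permutation-based Rabin fixpoint Z* for pairs (G_1,R_1),…,(G_k,R_k),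
with the artificial pair p_0 = 0, G_0 = ∅, R_0 = ∅ handled by the outermost
νY_0. μX_0. -/
def rabinZ (Gm : LiveGameGraph V) (Gp Rp : ℕ → Set V) (k : ℕ) : Set V :=
  gfpSet fun Y0 => lfpSet fun X0 =>
    Gm.rabinAux Gp Rp k (Finset.Icc 1 k) ((∅ : Set V)ᶜ)
      (((∅ : Set V)ᶜ) ∩ (((∅ : Set V) ∩ Gm.cpre Y0) ∪ Gm.apre Y0 X0))

end LiveGameGraph

/-! ### Auxiliary Knaster–Tarski lemmas -/

section KT

variable {V : Type*}

theorem lfpSet_le {f : Set V → Set V} {X : Set V} (h : f X ⊆ X) : lfpSet f ⊆ X :=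
  sInf_le h

theorem le_gfpSet {f : Set V → Set V} {X : Set V} (h : X ⊆ f X) : X ⊆ gfpSet f :=
  le_sSup h

theorem lfpSet_fixed {f : Set V → Set V}
    (hf : ∀ {S T : Set V}, S ⊆ T → f S ⊆ f T) : f (lfpSet f) = lfpSet f := by
  have h1 : f (lfpSet f) ⊆ lfpSet f :=
    le_sInf fun b hb => (hf (sInf_le hb)).trans hb
  exact Set.Subset.antisymm h1 (sInf_le (hf h1))

theorem gfpSet_fixed {f : Set V → Set V}
    (hf : ∀ {S T : Set V}, S ⊆ T → f S ⊆ f T) : f (gfpSet f) = gfpSet f := by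
  have h1 : gfpSet f ⊆ f (gfpSet f) :=
    sSup_le fun b hb => Set.Subset.trans hb (hf (le_sSup hb))
  exact Set.Subset.antisymm (le_sSup (hf h1)) h1

theorem lfpSet_mono {f g : Set V → Set V} (h : ∀ X, f X ⊆ g X) :
    lfpSet f ⊆ lfpSet g :=
  sInf_le_sInf fun b hb => (h b).trans hb

theorem gfpSet_mono {f g : Set V → Set V} (h : ∀ X, f X ⊆ g X) :
    gfpSet f ⊆ gfpSet g :=
  sSup_le_sSup fun b hb => Set.Subset.trans hb (h b)

theorem lfpSet_congr {f g : Set V → Set V} (h : ∀ X, f X = g X) :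
    lfpSet f = lfpSet g :=
  congrArg _ (funext h)

theorem gfpSet_congr {f g : Set V → Set V} (h : ∀ X, f X = g X) :
    gfpSet f = gfpSet g :=
  congrArg _ (funext h)

theorem lfpSet_const (c : Set V) : lfpSet (fun _ => c) = c := by
  apply Set.Subset.antisymm
  · apply sInf_le
    show c ⊆ c
    exact subset_rfl
  · apply le_sInf
    intro b hb
    exact hb

theorem gfpSet_const (c : Set V) : gfpSet (fun _ => c) = c := by
  apply Set.Subset.antisymm
  · apply sSup_le
    intro b hb
    exact hb
  · apply le_sSup
    show c ⊆ c
    exact subset_rfl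

end KT

/-! ### Monotonicity of the predecessor operators -/

namespace LiveGameGraph

variable {V : Type*} (Gm : LiveGameGraph V)

theorem pre0_mono {S T : Set V} (h : S ⊆ T) : Gm.pre0 S ⊆ Gm.pre0 T := by
  rintro v ⟨hv, w, hw, hwS⟩
  exact ⟨hv, w, hw, h hwS⟩

theorem pre1_mono {S T : Set V} (h : S ⊆ T) : Gm.pre1 S ⊆ Gm.pre1 T := by
  rintro v ⟨hv, hall⟩
  exact ⟨hv, fun w hw => h (hall w hw)⟩

theorem lpre_mono {S T : Set V} (h : S ⊆ T) : Gm.lpre S ⊆ Gm.lpre T := by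
  rintro v ⟨w, hw, hwS⟩
  exact ⟨w, hw, h hwS⟩

theorem cpre_mono {S T : Set V} (h : S ⊆ T) : Gm.cpre S ⊆ Gm.cpre T :=
  Set.union_subset_union (Gm.pre0_mono h) (Gm.pre1_mono h)

theorem apre_mono {S S' T T' : Set V} (hS : S ⊆ S') (hT : T ⊆ T') :
    Gm.apre S T ⊆ Gm.apre S' T' :=
  Set.union_subset_union (Gm.cpre_mono hT)
    (Set.inter_subset_inter (Gm.lpre_mono hT) (Gm.pre1_mono hS))

theorem cpre_union_apre_self (Y : Set V) : Gm.cpre Y ∪ Gm.apre Y Y = Gm.cpre Y := by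
  apply Set.union_eq_left.mpr
  apply Set.union_subset subset_rfl
  exact Set.inter_subset_right.trans Set.subset_union_right

theorem pre1_empty : Gm.pre1 (∅ : Set V) = ∅ := by
  apply Set.eq_empty_iff_forall_notMem.mpr
  rintro v ⟨_, hall⟩
  obtain ⟨w, hw⟩ := Gm.succ_nonempty v
  exact absurd (hall w hw) (Set.notMem_empty w)

theorem apre_empty (Y : Set V) : Gm.apre Y (∅ : Set V) = ∅ := by
  apply Set.eq_empty_iff_forall_notMem.mpr
  rintro v (⟨⟨_, w, _, hw⟩ | h⟩ | ⟨⟨w, _, hw⟩, _⟩)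
  · exact absurd hw (Set.notMem_empty w)
  · rw [Gm.pre1_empty] at h; exact absurd h (Set.notMem_empty v)
  · exact absurd hw (Set.notMem_empty w)

/-! ### The two collapse lemmas -/

/-- νY. μX. (B ∪ Q' ∩ (Cpre Y ∪ Apre(Y,X))) = νY. (B ∪ Q' ∩ Cpre Y). -/
theorem collapse0 (B Q' : Set V) :
    gfpSet (fun Y => lfpSet fun X => B ∪ Q' ∩ (Gm.cpre Y ∪ Gm.apre Y X)) =
      gfpSet (fun Y => B ∪ Q' ∩ Gm.cpre Y) := by
  have hZmono : ∀ {S T : Set V}, S ⊆ T →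
      B ∪ Q' ∩ Gm.cpre S ⊆ B ∪ Q' ∩ Gm.cpre T := fun h =>
    Set.union_subset_union subset_rfl (Set.inter_subset_inter subset_rfl (Gm.cpre_mono h))
  set Z := gfpSet (fun Y => B ∪ Q' ∩ Gm.cpre Y) with hZdef
  have hZfix : B ∪ Q' ∩ Gm.cpre Z = Z := gfpSet_fixed hZmono
  have hmonoX : ∀ (Y : Set V) {S T : Set V}, S ⊆ T →
      B ∪ Q' ∩ (Gm.cpre Y ∪ Gm.apre Y S) ⊆ B ∪ Q' ∩ (Gm.cpre Y ∪ Gm.apre Y T) :=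
    fun Y {S T} h => Set.union_subset_union subset_rfl (Set.inter_subset_inter subset_rfl
      (Set.union_subset_union subset_rfl (Gm.apre_mono subset_rfl h)))
  have hmonoY : ∀ {S T : Set V}, S ⊆ T →
      lfpSet (fun X => B ∪ Q' ∩ (Gm.cpre S ∪ Gm.apre S X)) ⊆
        lfpSet (fun X => B ∪ Q' ∩ (Gm.cpre T ∪ Gm.apre T X)) :=
    fun h => lfpSet_mono fun X => Set.union_subset_union subset_rfl
      (Set.inter_subset_inter subset_rfl
        (Set.union_subset_union (Gm.cpre_mono h) (Gm.apre_mono h subset_rfl)))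
  set W := gfpSet (fun Y => lfpSet fun X => B ∪ Q' ∩ (Gm.cpre Y ∪ Gm.apre Y X)) with hWdef
  have hWfix : lfpSet (fun X => B ∪ Q' ∩ (Gm.cpre W ∪ Gm.apre W X)) = W :=
    gfpSet_fixed hmonoY
  -- W ⊆ Z
  have hWfix2 : B ∪ Q' ∩ (Gm.cpre W ∪ Gm.apre W W) = W := by
    have h := lfpSet_fixed (f := fun X => B ∪ Q' ∩ (Gm.cpre W ∪ Gm.apre W X)) (hmonoX W)
    rw [hWfix] at h
    exact h
  have hWeq : B ∪ Q' ∩ Gm.cpre W = W := by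
    rw [← Gm.cpre_union_apre_self W]
    exact hWfix2
  have hsub2 : W ⊆ Z := le_gfpSet hWeq.superset
  -- Z ⊆ W
  have hsub1 : Z ⊆ W := by
    apply le_gfpSet
    show Z ⊆ lfpSet fun X => B ∪ Q' ∩ (Gm.cpre Z ∪ Gm.apre Z X)
    have hLfix := lfpSet_fixed (f := fun X => B ∪ Q' ∩ (Gm.cpre Z ∪ Gm.apre Z X)) (hmonoX Z)
    calc Z = B ∪ Q' ∩ Gm.cpre Z := hZfix.symm
      _ ⊆ B ∪ Q' ∩ (Gm.cpre Z ∪ Gm.apre Z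
            (lfpSet fun X => B ∪ Q' ∩ (Gm.cpre Z ∪ Gm.apre Z X))) :=
        Set.union_subset_union subset_rfl
          (Set.inter_subset_inter subset_rfl Set.subset_union_left)
      _ = lfpSet fun X => B ∪ Q' ∩ (Gm.cpre Z ∪ Gm.apre Z X) := hLfix
  exact Set.Subset.antisymm hsub2 hsub1

/-- The collapse lemma with one more level of (already collapsed) inner fixpoints. -/
theorem collapse1 (B Q' : Set V) (S : Finset ℕ) (hS : S.Nonempty)
    (C : ℕ → Set V) (hC : ∀ q, C q ⊆ Q') :
    gfpSet (fun Y => lfpSet fun X =>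
        ⋃ q ∈ S, gfpSet fun Y' =>
          (B ∪ Q' ∩ (Gm.cpre Y ∪ Gm.apre Y X)) ∪ C q ∩ Gm.cpre Y') =
      gfpSet (fun Y => B ∪ Q' ∩ Gm.cpre Y) := by
  have hZmono : ∀ {S' T : Set V}, S' ⊆ T →
      B ∪ Q' ∩ Gm.cpre S' ⊆ B ∪ Q' ∩ Gm.cpre T := fun h =>
    Set.union_subset_union subset_rfl (Set.inter_subset_inter subset_rfl (Gm.cpre_mono h))
  set Z := gfpSet (fun Y => B ∪ Q' ∩ Gm.cpre Y) with hZdef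
  have hZfix : B ∪ Q' ∩ Gm.cpre Z = Z := gfpSet_fixed hZmono
  -- monotonicity of the D operator
  have hD : ∀ {Y₁ Y₂ X₁ X₂ : Set V}, Y₁ ⊆ Y₂ → X₁ ⊆ X₂ →
      B ∪ Q' ∩ (Gm.cpre Y₁ ∪ Gm.apre Y₁ X₁) ⊆ B ∪ Q' ∩ (Gm.cpre Y₂ ∪ Gm.apre Y₂ X₂) :=
    fun hY hX => Set.union_subset_union subset_rfl (Set.inter_subset_inter subset_rfl
      (Set.union_subset_union (Gm.cpre_mono hY) (Gm.apre_mono hY hX)))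
  -- monotonicity in the innermost variable
  have hmonoY' : ∀ (D : Set V) (q : ℕ) {S' T : Set V}, S' ⊆ T →
      D ∪ C q ∩ Gm.cpre S' ⊆ D ∪ C q ∩ Gm.cpre T := fun D q {S' T} h =>
    Set.union_subset_union subset_rfl (Set.inter_subset_inter subset_rfl (Gm.cpre_mono h))
  have hmonoX : ∀ (Y : Set V) {S' T : Set V}, S' ⊆ T →
      (⋃ q ∈ S, gfpSet fun Y' =>
          (B ∪ Q' ∩ (Gm.cpre Y ∪ Gm.apre Y S')) ∪ C q ∩ Gm.cpre Y') ⊆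
        ⋃ q ∈ S, gfpSet fun Y' =>
          (B ∪ Q' ∩ (Gm.cpre Y ∪ Gm.apre Y T)) ∪ C q ∩ Gm.cpre Y' :=
    fun Y {S' T} h => Set.iUnion₂_mono fun q _ => gfpSet_mono fun Y' =>
      Set.union_subset_union (hD subset_rfl h) subset_rfl
  have hmonoY : ∀ {S' T : Set V}, S' ⊆ T →
      lfpSet (fun X => ⋃ q ∈ S, gfpSet fun Y' =>
          (B ∪ Q' ∩ (Gm.cpre S' ∪ Gm.apre S' X)) ∪ C q ∩ Gm.cpre Y') ⊆
        lfpSet (fun X => ⋃ q ∈ S, gfpSet fun Y' =>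
          (B ∪ Q' ∩ (Gm.cpre T ∪ Gm.apre T X)) ∪ C q ∩ Gm.cpre Y') :=
    fun h => lfpSet_mono fun X => Set.iUnion₂_mono fun q _ => gfpSet_mono fun Y' =>
      Set.union_subset_union (hD h subset_rfl) subset_rfl
  set W := gfpSet (fun Y => lfpSet fun X =>
      ⋃ q ∈ S, gfpSet fun Y' =>
        (B ∪ Q' ∩ (Gm.cpre Y ∪ Gm.apre Y X)) ∪ C q ∩ Gm.cpre Y') with hWdef
  have hWfix : lfpSet (fun X => ⋃ q ∈ S, gfpSet fun Y' =>
      (B ∪ Q' ∩ (Gm.cpre W ∪ Gm.apre W X)) ∪ C q ∩ Gm.cpre Y') = W :=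
    gfpSet_fixed hmonoY
  -- W ⊆ Z
  have hWfix2 : (⋃ q ∈ S, gfpSet fun Y' =>
      (B ∪ Q' ∩ (Gm.cpre W ∪ Gm.apre W W)) ∪ C q ∩ Gm.cpre Y') = W := by
    have h := lfpSet_fixed (f := fun X => ⋃ q ∈ S, gfpSet fun Y' =>
      (B ∪ Q' ∩ (Gm.cpre W ∪ Gm.apre W X)) ∪ C q ∩ Gm.cpre Y') (hmonoX W)
    rw [hWfix] at h
    exact h
  have hWfix3 : (⋃ q ∈ S, gfpSet fun Y' =>
      (B ∪ Q' ∩ Gm.cpre W) ∪ C q ∩ Gm.cpre Y') = W := by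
    rw [← Gm.cpre_union_apre_self W]
    exact hWfix2
  have hsub2 : W ⊆ Z := by
    apply le_gfpSet
    show W ⊆ B ∪ Q' ∩ Gm.cpre W
    conv_lhs => rw [← hWfix3]
    apply Set.iUnion₂_subset
    intro q hq
    set Tq := gfpSet fun Y' => (B ∪ Q' ∩ Gm.cpre W) ∪ C q ∩ Gm.cpre Y' with hTq
    have hTqW : Tq ⊆ W := by
      rw [← hWfix3]
      exact Set.subset_iUnion₂
        (s := fun q (_ : q ∈ S) => gfpSet fun Y' =>
          (B ∪ Q' ∩ Gm.cpre W) ∪ C q ∩ Gm.cpre Y') q hq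
    have hTqfix : (B ∪ Q' ∩ Gm.cpre W) ∪ C q ∩ Gm.cpre Tq = Tq :=
      gfpSet_fixed (hmonoY' _ q)
    rw [← hTqfix]
    exact Set.union_subset subset_rfl
      ((Set.inter_subset_inter (hC q) (Gm.cpre_mono hTqW)).trans
        Set.subset_union_right)
  -- Z ⊆ W
  have hsub1 : Z ⊆ W := by
    apply le_gfpSet
    show Z ⊆ lfpSet fun X => ⋃ q ∈ S, gfpSet fun Y' =>
      (B ∪ Q' ∩ (Gm.cpre Z ∪ Gm.apre Z X)) ∪ C q ∩ Gm.cpre Y'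
    set L := lfpSet fun X => ⋃ q ∈ S, gfpSet fun Y' =>
      (B ∪ Q' ∩ (Gm.cpre Z ∪ Gm.apre Z X)) ∪ C q ∩ Gm.cpre Y' with hLdef
    have hLfix : (⋃ q ∈ S, gfpSet fun Y' =>
        (B ∪ Q' ∩ (Gm.cpre Z ∪ Gm.apre Z L)) ∪ C q ∩ Gm.cpre Y') = L :=
      lfpSet_fixed (hmonoX Z)
    obtain ⟨q0, hq0⟩ := hS
    have hTq0 : gfpSet (fun Y' =>
        (B ∪ Q' ∩ (Gm.cpre Z ∪ Gm.apre Z L)) ∪ C q0 ∩ Gm.cpre Y') ⊆ L := by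
      conv_rhs => rw [← hLfix]
      exact Set.subset_iUnion₂
        (s := fun q (_ : q ∈ S) => gfpSet fun Y' =>
          (B ∪ Q' ∩ (Gm.cpre Z ∪ Gm.apre Z L)) ∪ C q ∩ Gm.cpre Y') q0 hq0
    have hconst : (B ∪ Q' ∩ (Gm.cpre Z ∪ Gm.apre Z L)) ⊆
        gfpSet (fun Y' => (B ∪ Q' ∩ (Gm.cpre Z ∪ Gm.apre Z L)) ∪ C q0 ∩ Gm.cpre Y') := by
      rw [← gfpSet_fixed (hmonoY' _ q0)]
      exact Set.subset_union_left
    calc Z = B ∪ Q' ∩ Gm.cpre Z := hZfix.symm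
      _ ⊆ B ∪ Q' ∩ (Gm.cpre Z ∪ Gm.apre Z L) :=
        Set.union_subset_union subset_rfl
          (Set.inter_subset_inter subset_rfl Set.subset_union_left)
      _ ⊆ L := hconst.trans hTq0
  exact Set.Subset.antisymm hsub2 hsub1

/-! ### The main collapse of the nested Rabin fixpoint -/

theorem rabinAux_collapse (Gm : LiveGameGraph V) (A : ℕ → Set V) :
    ∀ (n : ℕ) (avail : Finset ℕ) (Q acc : Set V), 1 ≤ n → n ≤ avail.card →
    Gm.rabinAux (fun _ => Set.univ) (fun j => (A j)ᶜ) n avail Q acc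
      = ⋃ p ∈ avail, gfpSet fun Y => acc ∪ Q ∩ A p ∩ Gm.cpre Y := by
  intro n
  induction n with
  | zero => intro _ _ _ h; omega
  | succ n ih =>
    intro avail Q acc _ hcard
    rw [LiveGameGraph.rabinAux]
    apply Set.iUnion₂_congr
    intro p hp
    have hcerase : (avail.erase p).card = avail.card - 1 :=
      Finset.card_erase_of_mem hp
    rcases Nat.eq_zero_or_pos n with hn | hn
    · subst hn
      simp only [LiveGameGraph.rabinAux, compl_compl, Set.univ_inter]
      exact Gm.collapse0 acc (Q ∩ A p)
    · have hrw : ∀ Y X : Set V,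
          Gm.rabinAux (fun _ => Set.univ) (fun j => (A j)ᶜ) n (avail.erase p)
            (Q ∩ ((A p)ᶜ)ᶜ)
            (acc ∪ (Q ∩ ((A p)ᶜ)ᶜ ∩ ((Set.univ ∩ Gm.cpre Y) ∪ Gm.apre Y X)))
          = ⋃ q ∈ avail.erase p, gfpSet fun Y' =>
              (acc ∪ (Q ∩ ((A p)ᶜ)ᶜ ∩ ((Set.univ ∩ Gm.cpre Y) ∪ Gm.apre Y X)))
                ∪ (Q ∩ ((A p)ᶜ)ᶜ) ∩ A q ∩ Gm.cpre Y' :=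
        fun Y X => ih (avail.erase p) (Q ∩ ((A p)ᶜ)ᶜ) _ hn (by omega)
      rw [gfpSet_congr fun Y => lfpSet_congr fun X => hrw Y X]
      simp only [compl_compl, Set.univ_inter]
      have hne : (avail.erase p).Nonempty := by
        apply Finset.card_pos.mp
        omega
      exact Gm.collapse1 acc (Q ∩ A p) (avail.erase p) hne
        (fun q => Q ∩ A p ∩ A q) (fun q => Set.inter_subset_left)

end LiveGameGraph

/-- for the Rabin condition with R_j = V ∖ A_j and G_j = V, the
permutation-based Rabin fixpoint equals the generalized co-Büchi fixpoint. -/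
theorem rabin_fixpoint_eq_gen_cobuchi_fixpoint {V : Type*} [Fintype V]
    (Gm : LiveGameGraph V) (r : ℕ) (A : ℕ → Set V) :
    Gm.rabinZ (fun _ => Set.univ) (fun j => (A j)ᶜ) r =
    (gfpSet fun Y0 => lfpSet fun X0 =>
      ⋃ a ∈ Finset.Icc 1 r, gfpSet fun Ya =>
        Gm.apre Y0 X0 ∪ (A a ∩ Gm.cpre Ya)) := by
  rcases Nat.eq_zero_or_pos r with hr | hr
  · subst hr
    have hIcc : Finset.Icc 1 0 = (∅ : Finset ℕ) := by decide
    rw [LiveGameGraph.rabinZ]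
    have hL : (gfpSet fun Y0 => lfpSet fun X0 =>
        Gm.rabinAux (fun _ => Set.univ) (fun j => (A j)ᶜ) 0 (Finset.Icc 1 0)
          ((∅ : Set V)ᶜ)
          (((∅ : Set V)ᶜ) ∩ (((∅ : Set V) ∩ Gm.cpre Y0) ∪ Gm.apre Y0 X0))) = ∅ := by
      have h1 : ∀ Y0 : Set V, (lfpSet fun X0 =>
          Gm.rabinAux (fun _ => Set.univ) (fun j => (A j)ᶜ) 0 (Finset.Icc 1 0)
            ((∅ : Set V)ᶜ)
            (((∅ : Set V)ᶜ) ∩ (((∅ : Set V) ∩ Gm.cpre Y0) ∪ Gm.apre Y0 X0))) = ∅ := by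
        intro Y0
        apply Set.Subset.antisymm _ (Set.empty_subset _)
        apply lfpSet_le
        simp only [LiveGameGraph.rabinAux, Set.compl_empty, Set.univ_inter,
          Set.empty_inter, Set.empty_union, Gm.apre_empty]
        exact subset_rfl
      rw [gfpSet_congr h1, gfpSet_const]
    rw [hL]
    have h2 : ∀ Y0 : Set V, (lfpSet fun X0 : Set V =>
        ⋃ a ∈ Finset.Icc 1 0, gfpSet fun Ya =>
          Gm.apre Y0 X0 ∪ (A a ∩ Gm.cpre Ya)) = ∅ := by
      intro Y0
      have : (fun X0 : Set V => ⋃ a ∈ Finset.Icc 1 0, gfpSet fun Ya =>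
          Gm.apre Y0 X0 ∪ (A a ∩ Gm.cpre Ya)) = fun _ => (∅ : Set V) := by
        funext X0
        rw [hIcc]
        simp
      rw [this, lfpSet_const]
    rw [gfpSet_congr h2, gfpSet_const]
  · rw [LiveGameGraph.rabinZ]
    refine gfpSet_congr fun Y0 => lfpSet_congr fun X0 => ?_
    rw [Gm.rabinAux_collapse A r (Finset.Icc 1 r) _ _ hr
      (by rw [Nat.card_Icc]; omega)]
    simp only [Set.compl_empty, Set.univ_inter, Set.empty_inter, Set.empty_union]
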